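/- Let a, b ∈ [0, π) with a ≠ π/2. Then there is no unit vector w ∈ ℂ⁴ that is simultaneously unbiased to the standard basis B₁, to the Fourier basis B₂, and to the basis B₃(a,b); i.e. there is no unit vector w ∈ ℂ⁴ with |⟨u, w⟩|² = 1/4 for every vector u belonging to any of the three bases B₁, B₂, B₃(a,b). -/

import Mathlib

open scoped ComplexInnerProductSpace

/-- The Fourier basis `B₂` of `ℂ⁴`: `(1/2)(1,1,1,1)`, `(1/2)(1,i,−1,−i)`,
`(1/2)(1,−1,1,−1)`, `(1/2)(1,−i,−1,i)`; the `m`-th component of the `j`-th vector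
is `i^{jm}/2`. -/
noncomputable def fourier4 (j : Fin 4) : EuclideanSpace ℂ (Fin 4) :=
  WithLp.toLp 2 (fun m => (1 / 2 : ℂ) * Complex.I ^ ((j : ℕ) * (m : ℕ)))

/-- The basis `B₃(a,b)` of `ℂ⁴` consisting of the four vectors
`(1/2)(1, e^{ia}, 1, −e^{ia})`, `(1/2)(1, −e^{ia}, 1, e^{ia})`,
`(1/2)(1, e^{ib}, −1, e^{ib})`, `(1/2)(1, −e^{ib}, −1, −e^{ib})`. -/
noncomputable def basis3 (a b : ℝ) (j : Fin 4) : EuclideanSpace ℂ (Fin 4) :=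
  WithLp.toLp 2 (fun m => (1 / 2 : ℂ) *
    !![1, Complex.exp (a * Complex.I), 1, -Complex.exp (a * Complex.I);
       1, -Complex.exp (a * Complex.I), 1, Complex.exp (a * Complex.I);
       1, Complex.exp (b * Complex.I), -1, Complex.exp (b * Complex.I);
       1, -Complex.exp (b * Complex.I), -1, -Complex.exp (b * Complex.I)] j m)

/-!
Write `w = (c₀, c₁, c₂, c₃)` and put `P = c₀ + c₂`, `Q = c₁ + c₃`, `R = c₀ - c₂`, `S = c₁ - c₃`.
Each unbiasedness condition says that `x + y` and `x - y` are unit vectors for one of the pairs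
`(P, Q)`, `(R, iS)` (Fourier basis), `(P, R)`, `(Q, S)` (standard basis), `(P, ēS)` (first two
vectors of `B₃`), i.e. `‖x‖² + ‖y‖² = 1` and `x ⟂ y` in `ℂ ≅ ℝ²`. The five norm equations force
`‖P‖² = ‖Q‖² = ‖R‖² = ‖S‖² = 1/2`, and the four nonzero vectors `P, Q, R, S` of the real plane
cannot satisfy `P ⟂ Q`, `P ⟂ R`, `Q ⟂ S`, `R ⟂ iS`.
-/

open Complex ComplexConjugate
open scoped InnerProductSpace

section InnerProductSpace

variable {F : Type*} [NormedAddCommGroup F] [InnerProductSpace ℝ F] {x y : F}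

theorem norm_sq_add_norm_sq_eq_one_of_norm_add_sq_of_norm_sub_sq
    (hadd : ‖x + y‖ ^ 2 = 1) (hsub : ‖x - y‖ ^ 2 = 1) : ‖x‖ ^ 2 + ‖y‖ ^ 2 = 1 := by
  rw [norm_add_sq_real] at hadd
  rw [norm_sub_sq_real] at hsub
  linarith

theorem real_inner_eq_zero_of_norm_add_sq_of_norm_sub_sq
    (hadd : ‖x + y‖ ^ 2 = 1) (hsub : ‖x - y‖ ^ 2 = 1) : ⟪x, y⟫_ℝ = 0 := by
  rw [norm_add_sq_real] at hadd
  rw [norm_sub_sq_real] at hsub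
  linarith

end InnerProductSpace

namespace Complex

variable {x y z : ℂ}

/-- In the real plane `ℂ`, two vectors orthogonal to the same nonzero vector are parallel
(`⟪y, I * z⟫_ℝ = 0` is the vanishing of the determinant of `y` and `z`). -/
theorem real_inner_I_mul_eq_zero_of_real_inner_eq_zero (hx : x ≠ 0)
    (hxy : ⟪x, y⟫_ℝ = 0) (hxz : ⟪x, z⟫_ℝ = 0) : ⟪y, I * z⟫_ℝ = 0 := by
  simp only [Complex.inner, mul_re, mul_im, conj_re, conj_im, I_re, I_im] at hxy hxz ⊢
  have hre : x.re * (y.re * z.im - y.im * z.re) = 0 := by linear_combination z.im * hxy - y.im * hxz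
  have him : x.im * (y.re * z.im - y.im * z.re) = 0 := by linear_combination y.re * hxz - z.re * hxy
  have hdet : y.re * z.im - y.im * z.re = 0 := by
    by_contra hne
    exact hx (Complex.ext ((mul_eq_zero.mp hre).resolve_right hne)
      ((mul_eq_zero.mp him).resolve_right hne))
  linear_combination -hdet

theorem eq_zero_or_eq_zero_of_real_inner_eq_zero_of_real_inner_I_mul_eq_zero
    (hxy : ⟪x, y⟫_ℝ = 0) (hxIy : ⟪x, I * y⟫_ℝ = 0) : x = 0 ∨ y = 0 := by
  have hmul : y * conj x = 0 := by
    refine Complex.ext ?_ ?_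
    · simpa [Complex.inner] using hxy
    · simp [Complex.inner] at hxIy ⊢
      linarith
  simpa [or_comm] using hmul

theorem false_of_norm_add_sq_of_norm_sub_sq {P Q R S u : ℂ} (hu : ‖u‖ = 1)
    (hPQ : ‖P + Q‖ ^ 2 = 1) (hPQ' : ‖P - Q‖ ^ 2 = 1)
    (hPR : ‖P + R‖ ^ 2 = 1) (hPR' : ‖P - R‖ ^ 2 = 1)
    (hQS : ‖Q + S‖ ^ 2 = 1) (hQS' : ‖Q - S‖ ^ 2 = 1)
    (hRS : ‖R + I * S‖ ^ 2 = 1) (hRS' : ‖R - I * S‖ ^ 2 = 1)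
    (hPS : ‖P + u * S‖ ^ 2 = 1) (hPS' : ‖P - u * S‖ ^ 2 = 1) : False := by
  have nPQ := norm_sq_add_norm_sq_eq_one_of_norm_add_sq_of_norm_sub_sq hPQ hPQ'
  have nPR := norm_sq_add_norm_sq_eq_one_of_norm_add_sq_of_norm_sub_sq hPR hPR'
  have nQS := norm_sq_add_norm_sq_eq_one_of_norm_add_sq_of_norm_sub_sq hQS hQS'
  have nRS := norm_sq_add_norm_sq_eq_one_of_norm_add_sq_of_norm_sub_sq hRS hRS'
  have nPS := norm_sq_add_norm_sq_eq_one_of_norm_add_sq_of_norm_sub_sq hPS hPS'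
  rw [norm_mul, norm_I, one_mul] at nRS
  rw [norm_mul, hu, one_mul] at nPS
  have hP2 : ‖P‖ ^ 2 = 1 / 2 := by linarith
  have hQ2 : ‖Q‖ ^ 2 = 1 / 2 := by linarith
  have hR2 : ‖R‖ ^ 2 = 1 / 2 := by linarith
  have hS2 : ‖S‖ ^ 2 = 1 / 2 := by linarith
  have hP : P ≠ 0 := by rintro rfl; norm_num at hP2
  have hQ : Q ≠ 0 := by rintro rfl; norm_num at hQ2
  have hR : R ≠ 0 := by rintro rfl; norm_num at hR2
  have hS : S ≠ 0 := by rintro rfl; norm_num at hS2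
  have hP_perp_IS : ⟪P, I * S⟫_ℝ = 0 := real_inner_I_mul_eq_zero_of_real_inner_eq_zero hQ
    (by rw [real_inner_comm]; exact real_inner_eq_zero_of_norm_add_sq_of_norm_sub_sq hPQ hPQ')
    (real_inner_eq_zero_of_norm_add_sq_of_norm_sub_sq hQS hQS')
  have hP_perp_S : ⟪P, S⟫_ℝ = 0 := by
    have h := real_inner_I_mul_eq_zero_of_real_inner_eq_zero hR
      (by rw [real_inner_comm]; exact real_inner_eq_zero_of_norm_add_sq_of_norm_sub_sq hPR hPR')
      (real_inner_eq_zero_of_norm_add_sq_of_norm_sub_sq hRS hRS')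
    rwa [← mul_assoc, I_mul_I, neg_one_mul, inner_neg_right, neg_eq_zero] at h
  rcases eq_zero_or_eq_zero_of_real_inner_eq_zero_of_real_inner_I_mul_eq_zero hP_perp_S hP_perp_IS
    with h | h
  exacts [hP h, hS h]

end Complex

section Coordinates

variable (w : EuclideanSpace ℂ (Fin 4))

theorem two_mul_inner_fourier4_zero : 2 * ⟪fourier4 0, w⟫ = (w 0 + w 2) + (w 1 + w 3) := by
  simp [fourier4, PiLp.inner_apply, Fin.sum_univ_four, map_ofNat]
  ring

theorem two_mul_inner_fourier4_one : 2 * ⟪fourier4 1, w⟫ = (w 0 - w 2) - I * (w 1 - w 3) := by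
  simp [fourier4, PiLp.inner_apply, Fin.sum_univ_four, map_ofNat, pow_succ]
  ring

theorem two_mul_inner_fourier4_two : 2 * ⟪fourier4 2, w⟫ = (w 0 + w 2) - (w 1 + w 3) := by
  simp [fourier4, PiLp.inner_apply, Fin.sum_univ_four, map_ofNat, pow_succ]
  ring

theorem two_mul_inner_fourier4_three : 2 * ⟪fourier4 3, w⟫ = (w 0 - w 2) + I * (w 1 - w 3) := by
  simp [fourier4, PiLp.inner_apply, Fin.sum_univ_four, map_ofNat, pow_succ]
  ring

theorem two_mul_inner_basis3_zero (a b : ℝ) :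
    2 * ⟪basis3 a b 0, w⟫ = (w 0 + w 2) + conj (exp (a * I)) * (w 1 - w 3) := by
  simp [basis3, PiLp.inner_apply, Fin.sum_univ_four, map_ofNat]
  ring

theorem two_mul_inner_basis3_one (a b : ℝ) :
    2 * ⟪basis3 a b 1, w⟫ = (w 0 + w 2) - conj (exp (a * I)) * (w 1 - w 3) := by
  simp [basis3, PiLp.inner_apply, Fin.sum_univ_four, map_ofNat]
  ring

end Coordinates

theorem norm_two_mul_sq_eq_one {z : ℂ} (hz : ‖z‖ ^ 2 = 1 / 4) : ‖2 * z‖ ^ 2 = 1 := by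
  rw [norm_mul, mul_pow, hz]
  norm_num

theorem stmt_11_general (a b : ℝ) :
    ¬ ∃ w : EuclideanSpace ℂ (Fin 4), ‖w‖ = 1 ∧
      (∀ j : Fin 4, ‖⟪EuclideanSpace.single j (1 : ℂ), w⟫‖ ^ 2 = 1 / 4) ∧
      (∀ j : Fin 4, ‖⟪fourier4 j, w⟫‖ ^ 2 = 1 / 4) ∧
      (∀ j : Fin 4, ‖⟪basis3 a b j, w⟫‖ ^ 2 = 1 / 4) := by
  rintro ⟨w, -, hstd, hfour, hB3⟩
  have hcoord (j : Fin 4) : ‖2 * w j‖ ^ 2 = 1 := by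
    simpa [EuclideanSpace.inner_single_left] using norm_two_mul_sq_eq_one (hstd j)
  refine false_of_norm_add_sq_of_norm_sub_sq (P := w 0 + w 2) (Q := w 1 + w 3)
    (R := w 0 - w 2) (S := w 1 - w 3) (u := conj (exp (a * I)))
    (by rw [norm_conj, norm_exp_ofReal_mul_I])
    ?_ ?_ ?_ ?_ ?_ ?_ ?_ ?_ ?_ ?_
  · simpa [two_mul_inner_fourier4_zero] using norm_two_mul_sq_eq_one (hfour 0)
  · simpa [two_mul_inner_fourier4_two] using norm_two_mul_sq_eq_one (hfour 2)
  · convert hcoord 0 using 3; ring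
  · convert hcoord 2 using 3; ring
  · convert hcoord 1 using 3; ring
  · convert hcoord 3 using 3; ring
  · simpa [two_mul_inner_fourier4_three] using norm_two_mul_sq_eq_one (hfour 3)
  · simpa [two_mul_inner_fourier4_one] using norm_two_mul_sq_eq_one (hfour 1)
  · simpa [two_mul_inner_basis3_zero] using norm_two_mul_sq_eq_one (hB3 0)
  · simpa [two_mul_inner_basis3_one] using norm_two_mul_sq_eq_one (hB3 1)

theorem stmt_11 (a b : ℝ) (ha0 : 0 ≤ a) (haπ : a < Real.pi)
    (hb0 : 0 ≤ b) (hbπ : b < Real.pi) (ha : a ≠ Real.pi / 2) :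
    ¬ ∃ w : EuclideanSpace ℂ (Fin 4), ‖w‖ = 1 ∧
      (∀ j : Fin 4, ‖⟪EuclideanSpace.single j (1 : ℂ), w⟫‖ ^ 2 = 1 / 4) ∧
      (∀ j : Fin 4, ‖⟪fourier4 j, w⟫‖ ^ 2 = 1 / 4) ∧
      (∀ j : Fin 4, ‖⟪basis3 a b j, w⟫‖ ^ 2 = 1 / 4) :=
  stmt_11_general a b
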